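/- Suppose n and n' are I×J matrices of nonnegative integers with the same row and column sums, and suppose b : Fin I × Fin J → ℕ is a bound function with b(i,j) ≥ 1 for all cells, such that n(i,j) ≤ b(i,j) and n'(i,j) ≤ b(i,j) for all (i,j). Then there is a sequence of signed basic moves transforming n into n' such that every intermediate table t satisfies 0 ≤ t(i,j) ≤ b(i,j) for all cells. -/

import Mathlib

/-- The basic move at rows `i1 ≠ i2` and columns `j1 ≠ j2`. -/
def basicMove {I J : ℕ} (i1 i2 : Fin I) (j1 j2 : Fin J) : Fin I × Fin J → ℤ :=
  fun p => (if p = (i1, j1) then 1 else 0) + (if p = (i2, j2) then 1 else 0)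
    - (if p = (i1, j2) then 1 else 0) - (if p = (i2, j1) then 1 else 0)

/-!
Call a cell a surplus cell if `x < y` there and a deficit cell if `x > y`. When `x ≠ y` have the
same margins, alternately stepping from a deficit cell to a surplus cell in its row and from there
to a deficit cell in its column eventually closes a cycle `C` with distinct rows and distinct
columns: `+1` on its surplus cells, `-1` on its deficit cells. Adding `C` moves every entry of `x`
towards `y`, so `x + C` stays in `[0, b]` and is strictly closer to `y` in `ℓ¹`; induct on that
distance.

To pass from `x` to `x + C` through bounded tables, split a cycle with at least three rows along a
chord into a basic move and a shorter cycle. They overlap only in the chord cell, where they are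
`+1` and `-1`; as `b ≥ 1` there, one of the two can be applied first without leaving `[0, b]`.
-/

open Finset Function

namespace ContingencyTable

variable {I J : ℕ}

def margins (x : Fin I × Fin J → ℤ) : (Fin I → ℤ) × (Fin J → ℤ) :=
  (fun i => ∑ j, x (i, j), fun j => ∑ i, x (i, j))

lemma margins_add (x y : Fin I × Fin J → ℤ) : margins (x + y) = margins x + margins y := by
  ext <;> simp [margins, sum_add_distrib]

lemma margins_basicMove (i₁ i₂ : Fin I) (j₁ j₂ : Fin J) : margins (basicMove i₁ i₂ j₁ j₂) = 0 := by
  ext <;> simp [margins, basicMove, sum_add_distrib, sum_sub_distrib, Prod.ext_iff, ite_and]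

def BasicStep (b x y : Fin I × Fin J → ℤ) : Prop :=
  y ∈ Set.Icc 0 b ∧
    ∃ (i₁ i₂ : Fin I) (j₁ j₂ : Fin J), i₁ ≠ i₂ ∧ j₁ ≠ j₂ ∧ y = x + basicMove i₁ i₂ j₁ j₂

abbrev Connected (b : Fin I × Fin J → ℤ) : (Fin I × Fin J → ℤ) → (Fin I × Fin J → ℤ) → Prop :=
  Relation.ReflTransGen (BasicStep b)

theorem Connected.margins_eq {b x y : Fin I × Fin J → ℤ} (h : Connected b x y) :
    margins x = margins y := by
  induction h with
  | refl => rfl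
  | tail _ hstep ih =>
    obtain ⟨-, i₁, i₂, j₁, j₂, -, -, rfl⟩ := hstep
    rw [ih, margins_add, margins_basicMove, add_zero]

theorem Connected.exists_list {b x y : Fin I × Fin J → ℤ} (h : Connected b x y)
    (hx : x ∈ Set.Icc 0 b) :
    ∃ L : List (Fin I × Fin J → ℤ),
      (∀ m ∈ L, ∃ (i₁ i₂ : Fin I) (j₁ j₂ : Fin J), i₁ ≠ i₂ ∧ j₁ ≠ j₂ ∧
        m = basicMove i₁ i₂ j₁ j₂) ∧
      x + L.sum = y ∧ ∀ k, x + (L.take k).sum ∈ Set.Icc 0 b := by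
  induction h using Relation.ReflTransGen.head_induction_on with
  | refl => exact ⟨[], by simp, by simp, fun k => by simpa using hx⟩
  | head hstep _ ih =>
    obtain ⟨hx', i₁, i₂, j₁, j₂, hi, hj, rfl⟩ := hstep
    obtain ⟨L, hL, hsum, htake⟩ := ih hx'
    refine ⟨basicMove i₁ i₂ j₁ j₂ :: L, ?_, by rw [List.sum_cons, ← add_assoc, hsum], ?_⟩
    · rintro m (_ | ⟨_, hm⟩)
      exacts [⟨i₁, i₂, j₁, j₂, hi, hj, rfl⟩, hL m hm]
    · rintro (_ | k)
      exacts [by simpa using hx, by simpa [add_assoc] using htake k]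

/-- `pathMove j ps` is `+1` on each cell of `ps` and `-1` on the cell in the same row and in the
column of the preceding cell (column `j` for the first one). When `j` is the column of the last
cell, this is the signed indicator of a cycle. -/
def pathMove : Fin J → List (Fin I × Fin J) → Fin I × Fin J → ℤ
  | _, [] => 0
  | j, p :: ps => Pi.single p 1 - Pi.single (p.1, j) 1 + pathMove p.2 ps

lemma pathMove_apply_of_fst_notMem {j : Fin J} {ps : List (Fin I × Fin J)} {a : Fin I × Fin J}
    (ha : a.1 ∉ ps.map Prod.fst) : pathMove j ps a = 0 := by
  induction ps generalizing j with
  | nil => rfl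
  | cons p ps ih =>
    simp only [List.map_cons, List.mem_cons, not_or] at ha
    simp [pathMove, Prod.ext_iff, ha.1, ih ha.2]

lemma pathMove_apply_of_snd_notMem {j : Fin J} {ps : List (Fin I × Fin J)} {a : Fin I × Fin J}
    (haj : a.2 ≠ j) (ha : a.2 ∉ ps.map Prod.snd) : pathMove j ps a = 0 := by
  induction ps generalizing j with
  | nil => rfl
  | cons p ps ih =>
    simp only [List.map_cons, List.mem_cons, not_or] at ha
    simp [pathMove, Prod.ext_iff, haj, ha.1, ih ha.1 ha.2]

lemma pathMove_cons_cons (j : Fin J) (p q : Fin I × Fin J) (ps : List (Fin I × Fin J)) :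
    pathMove j (p :: q :: ps) = basicMove p.1 q.1 p.2 j + pathMove j (q :: ps) := by
  funext a
  simp only [pathMove, basicMove, Pi.add_apply, Pi.sub_apply, Pi.single_apply, Prod.mk.eta]
  ring

lemma pathMove_singleton (p : Fin I × Fin J) : pathMove p.2 [p] = 0 := by
  simp [pathMove]

lemma pathMove_cons_apply_self {j : Fin J} {p : Fin I × Fin J} {ps : List (Fin I × Fin J)}
    (hp₁ : p.1 ∉ ps.map Prod.fst) (hp₂ : p.2 ≠ j) : pathMove j (p :: ps) p = 1 := by
  rw [pathMove, Pi.add_apply, pathMove_apply_of_fst_notMem hp₁]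
  simp [Prod.ext_iff, hp₂]

lemma pathMove_cons_apply_fst_start {j : Fin J} {p : Fin I × Fin J} {ps : List (Fin I × Fin J)}
    (hp₁ : p.1 ∉ ps.map Prod.fst) (hp₂ : p.2 ≠ j) : pathMove j (p :: ps) (p.1, j) = -1 := by
  rw [pathMove, Pi.add_apply, pathMove_apply_of_fst_notMem (a := (p.1, j)) hp₁]
  simp [Prod.ext_iff, hp₂.symm]

lemma basicMove_apply_snd_snd {i₁ i₂ : Fin I} {j₁ j₂ : Fin J} (hi : i₁ ≠ i₂) (hj : j₁ ≠ j₂) :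
    basicMove i₁ i₂ j₁ j₂ (i₂, j₂) = 1 := by
  simp [basicMove, hi.symm, hj.symm]

lemma basicMove_eq_zero_or_pathMove_eq_zero {p : Fin I × Fin J} {i : Fin I} {j : Fin J}
    {ps : List (Fin I × Fin J)} (hp₁ : p.1 ∉ ps.map Prod.fst) (hp₂ : p.2 ∉ ps.map Prod.snd)
    (hp₂j : p.2 ≠ j) (a : Fin I × Fin J) (ha : a ≠ (i, j)) :
    basicMove p.1 i p.2 j a = 0 ∨ pathMove j ps a = 0 := by
  by_cases ha₁ : a.1 = p.1
  · exact .inr (pathMove_apply_of_fst_notMem (ha₁ ▸ hp₁))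
  by_cases ha₂ : a.2 = p.2
  · exact .inr (pathMove_apply_of_snd_notMem (ha₂ ▸ hp₂j) (ha₂ ▸ hp₂))
  left
  simp [basicMove, Prod.ext_iff, ha₁, ha₂, ha]

lemma add_mem_Icc_of_eq_zero_or_eq_zero {α : Type*} {b x u v : α → ℤ} {a : α}
    (hx : x ∈ Set.Icc 0 b) (hxuv : x + u + v ∈ Set.Icc 0 b)
    (huv : ∀ q ≠ a, u q = 0 ∨ v q = 0) (ha : x a + u a ∈ Set.Icc 0 (b a)) :
    x + u ∈ Set.Icc 0 b := by
  rw [← Set.pi_univ_Icc, Set.mem_univ_pi] at hx hxuv ⊢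
  intro q
  by_cases hq : q = a
  · exact hq ▸ ha
  rcases huv q hq with h | h
  · simpa [h] using hx q
  · simpa [h] using hxuv q

lemma add_mem_Icc_or_add_mem_Icc {α : Type*} {b x u v : α → ℤ} {a : α} (hb : ∀ q, 1 ≤ b q)
    (hx : x ∈ Set.Icc 0 b) (hxuv : x + u + v ∈ Set.Icc 0 b)
    (huv : ∀ q ≠ a, u q = 0 ∨ v q = 0) (hua : u a = 1) (hva : v a = -1) :
    x + u ∈ Set.Icc 0 b ∨ x + v ∈ Set.Icc 0 b := by
  have hxa : 0 ≤ x a ∧ x a ≤ b a := ⟨hx.1 a, hx.2 a⟩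
  by_cases hlt : x a < b a
  · exact .inl (add_mem_Icc_of_eq_zero_or_eq_zero hx hxuv huv ⟨by omega, by omega⟩)
  · refine .inr (add_mem_Icc_of_eq_zero_or_eq_zero hx (by rwa [add_right_comm]) ?_
      ⟨by linarith [hb a], by omega⟩)
    exact fun q hq => (huv q hq).symm

theorem connected_add_pathMove {b : Fin I × Fin J → ℤ} (hb : ∀ q, 1 ≤ b q) {j : Fin J}
    {ps : List (Fin I × Fin J)} (hrows : (ps.map Prod.fst).Nodup)
    (hcols : (ps.map Prod.snd).Nodup) (hlast : (ps.map Prod.snd).getLast? = some j)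
    {x : Fin I × Fin J → ℤ} (hx : x ∈ Set.Icc 0 b) (hxC : x + pathMove j ps ∈ Set.Icc 0 b) :
    Connected b x (x + pathMove j ps) := by
  induction ps generalizing x with
  | nil => simp at hlast
  | cons p ps ih =>
    rcases ps with _ | ⟨q, ps⟩
    · obtain rfl : p.2 = j := by simpa using hlast
      simpa [pathMove_singleton] using Relation.ReflTransGen.refl
    obtain ⟨hp₁, hrows'⟩ := List.nodup_cons.mp hrows
    obtain ⟨hp₂, hcols'⟩ := List.nodup_cons.mp hcols
    rw [List.map_cons, List.map_cons, List.getLast?_cons_cons, ← List.map_cons] at hlast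
    have hpq : p.1 ≠ q.1 := fun h => hp₁ (h ▸ List.mem_cons_self)
    have hp₂j : p.2 ≠ j := fun h => hp₂ (h ▸ List.mem_of_getLast? hlast)
    have step : ∀ z, z + basicMove p.1 q.1 p.2 j ∈ Set.Icc 0 b →
        Connected b z (z + basicMove p.1 q.1 p.2 j) :=
      fun z hz => .single ⟨hz, p.1, q.1, p.2, j, hpq, hp₂j, rfl⟩
    rw [pathMove_cons_cons] at hxC ⊢
    rcases ps with _ | ⟨r, ps⟩
    · obtain rfl : q.2 = j := by simpa using hlast
      rw [pathMove_singleton, add_zero] at hxC ⊢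
      exact step x hxC
    have hq₁ : q.1 ∉ (r :: ps).map Prod.fst := (List.nodup_cons.mp hrows').1
    have hq₂j : q.2 ≠ j := fun h => (List.nodup_cons.mp hcols').1
      (h ▸ List.mem_of_getLast?
        (by rwa [List.map_cons, List.map_cons, List.getLast?_cons_cons, ← List.map_cons] at hlast))
    rw [← add_assoc] at hxC ⊢
    rcases add_mem_Icc_or_add_mem_Icc hb hx hxC
        (basicMove_eq_zero_or_pathMove_eq_zero hp₁ hp₂ hp₂j) (basicMove_apply_snd_snd hpq hp₂j)
        (pathMove_cons_apply_fst_start hq₁ hq₂j) with hxR | hxC'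
    · exact (step x hxR).trans (ih hrows' hcols' hlast hxR hxC)
    · refine (ih hrows' hcols' hlast hx hxC').trans ?_
      rw [add_right_comm]
      exact step _ (by rwa [add_right_comm])

def IsAlternating (x y : Fin I × Fin J → ℤ) : Fin J → List (Fin I × Fin J) → Prop
  | _, [] => True
  | j, p :: ps => x p < y p ∧ y (p.1, j) < x (p.1, j) ∧ IsAlternating x y p.2 ps

lemma IsAlternating.add_pathMove_mem_uIcc {x y : Fin I × Fin J → ℤ} {j : Fin J}
    {ps : List (Fin I × Fin J)} (h : IsAlternating x y j ps) (hrows : (ps.map Prod.fst).Nodup) :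
    x + pathMove j ps ∈ Set.uIcc x y := by
  rw [← Set.pi_univ_uIcc, Set.mem_univ_pi]
  intro a
  induction ps generalizing j with
  | nil => simp [pathMove]
  | cons p ps ih =>
    obtain ⟨hp, hpj, h⟩ := h
    obtain ⟨hp₁, hrows⟩ := List.nodup_cons.mp hrows
    rw [pathMove, Pi.add_apply, Pi.add_apply]
    by_cases ha : a.1 = p.1
    · rw [pathMove_apply_of_fst_notMem (ha ▸ hp₁), Set.mem_uIcc]
      by_cases hap : a = p
      · subst hap
        have : a ≠ (a.1, j) := fun h => (h ▸ hpj).asymm (h ▸ hp)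
        rw [Pi.sub_apply, Pi.single_eq_same, Pi.single_eq_of_ne this]
        omega
      by_cases haj : a = (p.1, j)
      · subst haj
        rw [Pi.sub_apply, Pi.single_eq_of_ne hap, Pi.single_eq_same]
        omega
      · rw [Pi.sub_apply, Pi.single_eq_of_ne hap, Pi.single_eq_of_ne haj]
        omega
    · have hap : a ≠ p := fun h => ha (h ▸ rfl)
      have haj : a ≠ (p.1, j) := fun h => ha (h ▸ rfl)
      rw [Pi.sub_apply, Pi.single_eq_of_ne hap, Pi.single_eq_of_ne haj, sub_zero, zero_add]
      exact ih h hrows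

lemma IsAlternating.pathMove_ne_zero {x y : Fin I × Fin J → ℤ} {j : Fin J}
    {ps : List (Fin I × Fin J)} (h : IsAlternating x y j ps) (hrows : (ps.map Prod.fst).Nodup)
    (hps : ps ≠ []) : pathMove j ps ≠ 0 := by
  obtain ⟨p, ps, rfl⟩ := List.exists_cons_of_ne_nil hps
  obtain ⟨hp, hpj, -⟩ := h
  have hp₂ : p.2 ≠ j := fun h => (h ▸ hpj).asymm hp
  intro h0
  simpa [h0] using pathMove_cons_apply_self (List.nodup_cons.mp hrows).1 hp₂

lemma isAlternating_map_range' {x y : Fin I × Fin J → ℤ} (F : ℕ → Fin I × Fin J)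
    (col : ℕ → Fin J) (hF : ∀ t, (F t).2 = col (t + 1)) (hsur : ∀ t, x (F t) < y (F t))
    (hdef : ∀ t, y ((F t).1, col t) < x ((F t).1, col t)) (s n : ℕ) :
    IsAlternating x y (col s) ((List.range' s n).map F) := by
  induction n generalizing s with
  | zero => trivial
  | succ n ih => exact ⟨hsur s, hdef s, (hF s).symm ▸ ih (s + 1)⟩

lemma exists_lt_of_sum_eq {α : Type*} [Fintype α] {f g : α → ℤ} (h : ∑ a, f a = ∑ a, g a)
    {a : α} (ha : f a < g a) : ∃ a', g a' < f a' := by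
  by_contra! h'
  exact (sum_lt_sum (fun i _ => h' i) ⟨a, mem_univ a, ha⟩).ne h

lemma sum_natAbs_sub_lt_of_mem_uIcc {α : Type*} [Fintype α] {x y z : α → ℤ}
    (hz : z ∈ Set.uIcc x y) (hzx : z ≠ x) :
    ∑ a, (z a - y a).natAbs < ∑ a, (x a - y a).natAbs := by
  rw [← Set.pi_univ_uIcc, Set.mem_univ_pi] at hz
  obtain ⟨a, ha⟩ := Function.ne_iff.mp hzx
  refine sum_lt_sum (fun q _ => ?_) ⟨a, mem_univ a, ?_⟩
  · have := Set.mem_uIcc.mp (hz q)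
    omega
  · have := Set.mem_uIcc.mp (hz a)
    omega

lemma _root_.Function.exists_iterate_mem_periodicPts {α : Type*} [Finite α] (f : α → α) (x : α) :
    ∃ n, f^[n] x ∈ periodicPts f := by
  obtain ⟨m, n, heq, hne⟩ : ∃ m n, f^[m] x = f^[n] x ∧ m ≠ n := by
    simpa [Injective] using not_injective_infinite_finite (f^[·] x)
  wlog hmn : m < n generalizing m n
  · exact this n m heq.symm hne.symm (by omega)
  refine ⟨m, mk_mem_periodicPts (n := n - m) (by omega) ?_⟩
  rw [IsPeriodicPt, IsFixedPt, ← iterate_add_apply, Nat.sub_add_cancel hmn.le, heq]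

/-- The cycle runs along a periodic orbit of `c ∘ r`; its rows are distinct because `c ∘ r` is
injective on the orbit. -/
lemma exists_isAlternating_of_orbit {x y : Fin I × Fin J → ℤ} (r : Fin J → Fin I)
    (c : Fin I → Fin J) {D : Set (Fin J)} {j₀ : Fin J} (hj₀ : j₀ ∈ D)
    (hmaps : ∀ j ∈ D, c (r j) ∈ D) (hdef : ∀ j ∈ D, y (r j, j) < x (r j, j))
    (hsur : ∀ j ∈ D, x (r j, c (r j)) < y (r j, c (r j))) :
    ∃ j ps, ps ≠ [] ∧ (ps.map Prod.fst).Nodup ∧ (ps.map Prod.snd).Nodup ∧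
      (ps.map Prod.snd).getLast? = some j ∧ IsAlternating x y j ps := by
  set f := c ∘ r
  have horbit : ∀ n, f^[n] j₀ ∈ D := fun n => by
    induction n with
    | zero => exact hj₀
    | succ n ih => rw [iterate_succ_apply']; exact hmaps _ ih
  obtain ⟨n₀, hper⟩ := exists_iterate_mem_periodicPts f j₀
  set z := f^[n₀] j₀
  set m := minimalPeriod f z
  have hm : 0 < m := minimalPeriod_pos_of_mem_periodicPts hper
  have hD : ∀ t, f^[t] z ∈ D := fun t => by rw [← iterate_add_apply]; exact horbit _
  have hinj : ∀ s ∈ List.range m, ∀ t ∈ List.range m, f (f^[s] z) = f (f^[t] z) → s = t := by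
    intro s hs t ht hst
    rw [← iterate_succ_apply' f, ← iterate_succ_apply' f, iterate_succ_apply,
      iterate_succ_apply] at hst
    have hm' : minimalPeriod f (f z) = m := minimalPeriod_apply hper
    exact (iterate_eq_iterate_iff_of_lt_minimalPeriod (hm' ▸ List.mem_range.mp hs)
      (hm' ▸ List.mem_range.mp ht)).mp hst
  refine ⟨z, (List.range m).map fun t => (r (f^[t] z), f (f^[t] z)), by simp [hm.ne'],
    ?_, ?_, ?_, ?_⟩
  · rw [List.map_map]
    exact List.nodup_range.map_on fun s hs t ht hst => hinj s hs t ht (congrArg c hst)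
  · rw [List.map_map]
    exact List.nodup_range.map_on hinj
  · rw [List.getLast?_map, List.getLast?_map, List.getLast?_range, if_neg hm.ne']
    simp only [Option.map_some]
    rw [← iterate_succ_apply' f, Nat.succ_eq_add_one, Nat.sub_one_add_one hm.ne',
      iterate_minimalPeriod]
  · rw [List.range_eq_range']
    exact isAlternating_map_range' _ (fun t => f^[t] z) (fun t => (iterate_succ_apply' f t z).symm)
      (fun t => hsur _ (hD t)) (fun t => hdef _ (hD t)) 0 m

lemma exists_isAlternating_of_margins_eq {x y : Fin I × Fin J → ℤ} (hm : margins x = margins y)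
    (hxy : x ≠ y) :
    ∃ j ps, ps ≠ [] ∧ (ps.map Prod.fst).Nodup ∧ (ps.map Prod.snd).Nodup ∧
      (ps.map Prod.snd).getLast? = some j ∧ IsAlternating x y j ps := by
  have hrow (i : Fin I) : ∑ j, x (i, j) = ∑ j, y (i, j) := congrFun (congrArg Prod.fst hm) i
  have hcol (j : Fin J) : ∑ i, x (i, j) = ∑ i, y (i, j) := congrFun (congrArg Prod.snd hm) j
  obtain ⟨q, hq⟩ : ∃ q, y q < x q := by
    obtain ⟨q, hq⟩ := Function.ne_iff.mp hxy
    rcases hq.lt_or_gt with h | h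
    · exact exists_lt_of_sum_eq (by simp only [Fintype.sum_prod_type, hrow]) h
    · exact ⟨q, h⟩
  have : Nonempty (Fin I) := ⟨q.1⟩
  have : Nonempty (Fin J) := ⟨q.2⟩
  let D : Set (Fin J) := {j | ∃ i, y (i, j) < x (i, j)}
  let r (j : Fin J) : Fin I := Classical.epsilon fun i => y (i, j) < x (i, j)
  let c (i : Fin I) : Fin J := Classical.epsilon fun j => x (i, j) < y (i, j)
  have hdef : ∀ j ∈ D, y (r j, j) < x (r j, j) := fun j hj => Classical.epsilon_spec hj
  have hsur : ∀ j ∈ D, x (r j, c (r j)) < y (r j, c (r j)) :=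
    fun j hj => Classical.epsilon_spec (exists_lt_of_sum_eq (hrow (r j)).symm (hdef j hj))
  exact exists_isAlternating_of_orbit r c (D := D) ⟨q.1, hq⟩
    (fun j hj => exists_lt_of_sum_eq (hcol _) (hsur j hj)) hdef hsur

theorem connected_of_margins_eq {b : Fin I × Fin J → ℤ} (hb : ∀ q, 1 ≤ b q)
    {x y : Fin I × Fin J → ℤ} (hx : x ∈ Set.Icc 0 b) (hy : y ∈ Set.Icc 0 b)
    (hm : margins x = margins y) : Connected b x y := by
  induction hd : ∑ q, (x q - y q).natAbs using Nat.strong_induction_on generalizing x with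
  | _ d ih =>
  by_cases hxy : x = y
  · exact hxy ▸ .refl
  obtain ⟨j, ps, hps, hrows, hcols, hlast, halt⟩ := exists_isAlternating_of_margins_eq hm hxy
  have hbetween := halt.add_pathMove_mem_uIcc hrows
  have hxC : x + pathMove j ps ∈ Set.Icc 0 b := Set.uIcc_subset_Icc hx hy hbetween
  have hcycle := connected_add_pathMove hb hrows hcols hlast hx hxC
  refine hcycle.trans (ih _ ?_ hxC (hcycle.margins_eq.symm.trans hm) rfl)
  exact hd ▸ sum_natAbs_sub_lt_of_mem_uIcc hbetween (by simpa using halt.pathMove_ne_zero hrows hps)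

end ContingencyTable

open ContingencyTable in
/-- Any two tables with the same row and column sums, bounded by a strictly positive
bound `b`, are connected by signed basic moves through intermediate tables whose
entries stay between `0` and `b`. -/
theorem connected_by_basic_moves_bounded {I J : ℕ} (n n' b : Fin I × Fin J → ℕ)
    (hb : ∀ p, 1 ≤ b p) (hnb : ∀ p, n p ≤ b p) (hn'b : ∀ p, n' p ≤ b p)
    (hrow : ∀ i : Fin I, ∑ j, n (i, j) = ∑ j, n' (i, j))
    (hcol : ∀ j : Fin J, ∑ i, n (i, j) = ∑ i, n' (i, j)) :
    ∃ L : List (Fin I × Fin J → ℤ),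
      (∀ m ∈ L, ∃ (i1 i2 : Fin I) (j1 j2 : Fin J), i1 ≠ i2 ∧ j1 ≠ j2 ∧
        (m = basicMove i1 i2 j1 j2 ∨ m = -basicMove i1 i2 j1 j2)) ∧
      ((fun p => (n p : ℤ)) + L.sum = fun p => (n' p : ℤ)) ∧
      (∀ k : ℕ, ∀ p : Fin I × Fin J,
        0 ≤ (n p : ℤ) + (L.take k).sum p ∧ (n p : ℤ) + (L.take k).sum p ≤ (b p : ℤ)) := by
  have hbox (t : Fin I × Fin J → ℕ) (ht : ∀ p, t p ≤ b p) :
      (fun p => (t p : ℤ)) ∈ Set.Icc 0 fun p => (b p : ℤ) :=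
    ⟨fun p => Int.natCast_nonneg _, fun p => Int.ofNat_le.mpr (ht p)⟩
  have hmargins : margins (fun p => (n p : ℤ)) = margins fun p => (n' p : ℤ) :=
    Prod.ext (funext fun i => by simp only [margins]; exact_mod_cast hrow i)
      (funext fun j => by simp only [margins]; exact_mod_cast hcol j)
  obtain ⟨L, hL, hsum, htake⟩ := (connected_of_margins_eq (fun p => Int.ofNat_le.mpr (hb p))
    (hbox n hnb) (hbox n' hn'b) hmargins).exists_list (hbox n hnb)
  refine ⟨L, fun m hm => ?_, hsum, fun k p => ⟨(htake k).1 p, (htake k).2 p⟩⟩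
  obtain ⟨i₁, i₂, j₁, j₂, hi, hj, rfl⟩ := hL m hm
  exact ⟨i₁, i₂, j₁, j₂, hi, hj, .inl rfl⟩
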